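/- The pinned configuration space C_{v₄,v₁}(H★,h) — the space of maps p : {v₁,…,v₇} → ℝ² with p(v₄)=(0,0), p(v₁)=(√3,0), dist(p₁,p₄)=dist(p₂,p₄)=dist(p₃,p₄)=√3 and dist(p₁,p₅)=dist(p₁,p₆)=dist(p₂,p₅)=dist(p₂,p₇)=dist(p₃,p₆)=dist(p₃,p₇)=3/2 — has exactly three connected components, while the pinned configuration space C_{v₄,v₁}(G★★,l) — the space of maps q : {v₁,…,v₈} → ℝ² satisfying the same constraints together with dist(q₂,q₈)=dist(q₃,q₈)=√2 — is nonempty and connected. -/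

import Mathlib

/-- The pinned configuration space `C_{v₄,v₁}(H★, h)`: maps
`p : {v₁,…,v₇} → ℝ²` (vertex `vᵢ` is index `i-1`) with `p(v₄) = (0,0)`,
`p(v₁) = (√3, 0)`, `dist(p₁,p₄) = dist(p₂,p₄) = dist(p₃,p₄) = √3` and
`dist(p₁,p₅) = dist(p₁,p₆) = dist(p₂,p₅) = dist(p₂,p₇) = dist(p₃,p₆)
 = dist(p₃,p₇) = 3/2`. -/
noncomputable def HstarPinnedConfig : Set (Fin 7 → EuclideanSpace ℝ (Fin 2)) :=
  {p | p 3 = 0 ∧ p 0 = ![Real.sqrt 3, 0] ∧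
    dist (p 0) (p 3) = Real.sqrt 3 ∧ dist (p 1) (p 3) = Real.sqrt 3 ∧
    dist (p 2) (p 3) = Real.sqrt 3 ∧
    dist (p 0) (p 4) = 3 / 2 ∧ dist (p 0) (p 5) = 3 / 2 ∧
    dist (p 1) (p 4) = 3 / 2 ∧ dist (p 1) (p 6) = 3 / 2 ∧
    dist (p 2) (p 5) = 3 / 2 ∧ dist (p 2) (p 6) = 3 / 2}

/-- The pinned configuration space `C_{v₄,v₁}(G★★, l)` where `G★★` is `H★`
with an extra vertex `v₈` (index `7`) and extra edges `v₂v₈, v₃v₈` of length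
`√2`. -/
noncomputable def GstarstarPinnedConfig :
    Set (Fin 8 → EuclideanSpace ℝ (Fin 2)) :=
  {q | q 3 = 0 ∧ q 0 = ![Real.sqrt 3, 0] ∧
    dist (q 0) (q 3) = Real.sqrt 3 ∧ dist (q 1) (q 3) = Real.sqrt 3 ∧
    dist (q 2) (q 3) = Real.sqrt 3 ∧
    dist (q 0) (q 4) = 3 / 2 ∧ dist (q 0) (q 5) = 3 / 2 ∧
    dist (q 1) (q 4) = 3 / 2 ∧ dist (q 1) (q 6) = 3 / 2 ∧
    dist (q 2) (q 5) = 3 / 2 ∧ dist (q 2) (q 6) = 3 / 2 ∧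
    dist (q 1) (q 7) = Real.sqrt 2 ∧ dist (q 2) (q 7) = Real.sqrt 2}

/-!
Place `v₄` at the origin. Then `v₁, v₂, v₃` lie on the circle of radius `√3`, and each of
`v₅, v₆, v₇` is at distance `3/2` from both ends of a chord of this circle, which requires the
chord to have length at most `3`, i.e. to subtend an angle of at most `2π/3`. With `v₁` fixed,
the three points therefore either form one of the two inscribed equilateral triangles, or lie in
an arc of angle at most `2π/3`. In an equilateral configuration every chord has length exactly
`3`, so every apex is the midpoint of its chord: these configurations are two isolated points.
Otherwise each apex lies on one of the two sides of its chord or, if the chord has collapsed to a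
point, anywhere on a circle around it, from where it can be moved to either side. Shrinking the
arc to `v₁` while carrying every apex along on its side, and then rotating the apexes around
`v₁`, joins the configuration to a fixed one. For `G★★` the bars `v₂v₈`, `v₃v₈` of length `√2`
bound the chord `v₂v₃` by `2√2 < 3`, which rules out the equilateral triangles, and the same
deformation, carrying `v₈` along, connects everything.
-/

open Real Set Function

local notation "E²" => EuclideanSpace ℝ (Fin 2)

lemma natCard_connectedComponents_eq_three {X : Type*} [TopologicalSpace X] [T1Space X]
    {a b c : X} (ha : IsOpen {a}) (hb : IsOpen {b}) (hab : a ≠ b) (hca : c ≠ a) (hcb : c ≠ b)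
    (hc : ∀ x, x ≠ a → x ≠ b → x ∈ connectedComponent c) :
    Nat.card (ConnectedComponents X) = 3 := by
  have hcomp : ∀ {y : X}, IsOpen {y} → connectedComponent y = {y} := fun h =>
    (IsClopen.connectedComponent_subset ⟨isClosed_singleton, h⟩ rfl).antisymm
      (singleton_subset_iff.2 mem_connectedComponent)
  rw [← ncard_univ, ncard_eq_three]
  refine ⟨a, b, c, ?_, ?_, ?_, ?_⟩
  · rwa [Ne, ConnectedComponents.coe_eq_coe', hcomp hb]
  · rwa [Ne, eq_comm, ConnectedComponents.coe_eq_coe', hcomp ha]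
  · rwa [Ne, eq_comm, ConnectedComponents.coe_eq_coe', hcomp hb]
  · refine (eq_univ_of_forall fun z => ?_).symm
    obtain ⟨x, rfl⟩ := ConnectedComponents.surjective_coe z
    by_cases hxa : x = a
    · exact hxa ▸ mem_insert _ _
    by_cases hxb : x = b
    · exact hxb ▸ mem_insert_of_mem _ (mem_insert _ _)
    exact mem_insert_of_mem _
      (mem_insert_of_mem _ (ConnectedComponents.coe_eq_coe'.2 (hc x hxa hxb)))

lemma abs_sin_le_abs_sin {x y : ℝ} (h : |x| ≤ |y|) (hy : |y| ≤ π / 2) : |sin x| ≤ |sin y| := by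
  have := pi_pos
  rw [abs_sin_eq_sin_abs_of_abs_le_pi (by linarith), abs_sin_eq_sin_abs_of_abs_le_pi (by linarith)]
  exact sin_le_sin_of_le_of_le_pi_div_two (by linarith [abs_nonneg x]) hy h

lemma abs_le_or_eq_of_abs_sin_le {a x : ℝ} (ha : 0 ≤ a) (hx : |x| ≤ π - a)
    (h : |sin x| ≤ sin a) : |x| ≤ a ∨ |x| = π - a := by
  by_contra! hne
  obtain ⟨hax, hxa⟩ := hne
  have hxa' : |x| < π - a := lt_of_le_of_ne hx hxa
  rw [abs_sin_eq_sin_abs_of_abs_le_pi (by linarith)] at h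
  rcases le_or_gt |x| (π / 2) with hx2 | hx2
  · linarith [sin_lt_sin_of_lt_of_le_pi_div_two (by linarith) hx2 hax]
  · rw [← sin_pi_sub] at h
    have hlt : a < π - |x| := by linarith
    linarith [sin_lt_sin_of_lt_of_le_pi_div_two (by linarith) (by linarith) hlt]

lemma abs_le_pi_div_three_or {α β : ℝ} (hα : |α| ≤ 2 * π / 3) (hβ : |β| ≤ 2 * π / 3)
    (hαβ : |α - β| ≤ 2 * π / 3) : |α| ≤ π / 3 ∨ |β| ≤ π / 3 ∨ |α - β| ≤ π / 3 := by
  by_contra! h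
  obtain ⟨h₁, h₂, h₃⟩ := h
  rw [lt_abs] at h₁ h₂ h₃
  rw [abs_le] at hα hβ hαβ
  rcases h₁ with h₁ | h₁ <;> rcases h₂ with h₂ | h₂ <;> rcases h₃ with h₃ | h₃ <;> linarith

lemma neg_eq_and_abs_eq_of_abs_sub_eq {α β : ℝ} (hα : |α| ≤ 2 * π / 3) (hβ : |β| ≤ 2 * π / 3)
    (hαβ : |α - β| = 4 * π / 3) : β = -α ∧ |α| = 2 * π / 3 := by
  rw [abs_le] at hα hβ
  rcases abs_eq (by positivity) |>.1 hαβ with h | h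
  · exact ⟨by linarith, by rw [abs_of_nonneg (by linarith)]; linarith⟩
  · exact ⟨by linarith, by rw [abs_of_nonpos (by linarith)]; linarith⟩

lemma two_mul_sqrt_two_lt_three : 2 * √2 < 3 := by
  nlinarith [sq_sqrt (show (0 : ℝ) ≤ 2 by norm_num), sqrt_nonneg 2]

noncomputable def polar (r θ : ℝ) : E² := !₂[r * cos θ, r * sin θ]

@[simp] lemma polar_apply_zero (r θ : ℝ) : polar r θ 0 = r * cos θ := rfl

@[simp] lemma polar_apply_one (r θ : ℝ) : polar r θ 1 = r * sin θ := rfl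

lemma ext_fin_two {x y : E²} (h₀ : x 0 = y 0) (h₁ : x 1 = y 1) : x = y := by
  ext i
  fin_cases i
  exacts [h₀, h₁]

lemma dist_sq_fin_two (x y : E²) : dist x y ^ 2 = (x 0 - y 0) ^ 2 + (x 1 - y 1) ^ 2 := by
  rw [EuclideanSpace.dist_eq, sq_sqrt (by positivity), Fin.sum_univ_two, Real.dist_eq,
    Real.dist_eq, sq_abs, sq_abs]

lemma dist_eq_iff_fin_two {x y : E²} {L : ℝ} (hL : 0 ≤ L) :
    dist x y = L ↔ (x 0 - y 0) ^ 2 + (x 1 - y 1) ^ 2 = L ^ 2 := by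
  rw [← dist_sq_fin_two, sq_eq_sq₀ dist_nonneg hL]

lemma dist_polar_polar_sq (a b μ ν : ℝ) :
    dist (polar a μ) (polar b ν) ^ 2 = a ^ 2 + b ^ 2 - 2 * a * b * cos (μ - ν) := by
  rw [dist_sq_fin_two, polar_apply_zero, polar_apply_zero, polar_apply_one, polar_apply_one,
    cos_sub]
  linear_combination a ^ 2 * sin_sq_add_cos_sq μ + b ^ 2 * sin_sq_add_cos_sq ν

lemma dist_polar_polar (r θ₁ θ₂ : ℝ) :
    dist (polar r θ₁) (polar r θ₂) = |2 * r * sin ((θ₁ - θ₂) / 2)| := by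
  obtain ⟨δ, rfl⟩ : ∃ δ, θ₁ = θ₂ + 2 * δ := ⟨(θ₁ - θ₂) / 2, by ring⟩
  rw [← sqrt_sq_eq_abs, ← sqrt_sq dist_nonneg, dist_polar_polar_sq,
    show θ₂ + 2 * δ - θ₂ = 2 * δ by ring, show 2 * δ / 2 = δ by ring, cos_two_mul]
  congr 1
  linear_combination (-4 * r ^ 2) * sin_sq_add_cos_sq δ

lemma norm_polar (r θ : ℝ) : ‖polar r θ‖ = |r| := by
  rw [EuclideanSpace.norm_eq, Fin.sum_univ_two, ← sqrt_sq_eq_abs]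
  congr 1
  simp only [polar_apply_zero, polar_apply_one, Real.norm_eq_abs, sq_abs]
  linear_combination r ^ 2 * cos_sq_add_sin_sq θ

lemma exists_eq_polar (x : E²) : ∃ θ, |θ| ≤ π ∧ x = polar ‖x‖ θ := by
  set z : ℂ := ⟨x 0, x 1⟩
  have hz : ‖z‖ = ‖x‖ := by
    rw [Complex.norm_eq_sqrt_sq_add_sq, EuclideanSpace.norm_eq, Fin.sum_univ_two,
      Real.norm_eq_abs, Real.norm_eq_abs, sq_abs, sq_abs]
  refine ⟨z.arg, Complex.abs_arg_le_pi z, ext_fin_two ?_ ?_⟩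
  · simp [← hz, Complex.norm_mul_cos_arg, z]
  · simp [← hz, Complex.norm_mul_sin_arg, z]

@[fun_prop]
lemma Continuous.polar {X : Type*} [TopologicalSpace X] {f g : X → ℝ} (hf : Continuous f)
    (hg : Continuous g) : Continuous fun x => polar (f x) (g x) := by
  refine (PiLp.continuous_toLp 2 _).comp (continuous_pi fun i => ?_)
  fin_cases i
  · exact hf.mul (continuous_cos.comp hg)
  · exact hf.mul (continuous_sin.comp hg)

lemma polar_eq_polar_of_sin_eq_zero {r θ₁ θ₂ : ℝ} (h : sin ((θ₁ - θ₂) / 2) = 0) :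
    polar r θ₁ = polar r θ₂ :=
  dist_eq_zero.1 (by rw [dist_polar_polar, h, mul_zero, abs_zero])

/-- The points at distance `L` from both `polar r θ₁` and `polar r θ₂`, one for each `s = ±1`
(when `2 L` is at least the chord). They lie on the line at the mean angle `(θ₁ + θ₂) / 2`, and
this polar form stays continuous in `θ₁, θ₂` where the two points meet. -/
noncomputable def apex (r L θ₁ θ₂ s : ℝ) : E² :=
  polar (r * cos ((θ₁ - θ₂) / 2) + s * √(L ^ 2 - r ^ 2 * sin ((θ₁ - θ₂) / 2) ^ 2))
    ((θ₁ + θ₂) / 2)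

lemma sq_le_of_dist_polar_polar_le {r L θ₁ θ₂ : ℝ} (hL : 0 ≤ L)
    (h : dist (polar r θ₁) (polar r θ₂) ≤ 2 * L) : r ^ 2 * sin ((θ₁ - θ₂) / 2) ^ 2 ≤ L ^ 2 := by
  rw [dist_polar_polar] at h
  nlinarith [sq_le_sq.2 (h.trans_eq (abs_of_nonneg (by positivity : 0 ≤ 2 * L)).symm)]

lemma dist_polar_apex_sq {r L δ μ s : ℝ} (hs : s ^ 2 = 1) (h : r ^ 2 * sin δ ^ 2 ≤ L ^ 2) :
    dist (polar r (μ + δ)) (polar (r * cos δ + s * √(L ^ 2 - r ^ 2 * sin δ ^ 2)) μ) ^ 2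
      = L ^ 2 := by
  rw [dist_polar_polar_sq, add_sub_cancel_left]
  linear_combination √(L ^ 2 - r ^ 2 * sin δ ^ 2) ^ 2 * hs + sq_sqrt (sub_nonneg.2 h)
    - r ^ 2 * sin_sq_add_cos_sq δ

lemma dist_polar_apex_left {r L θ₁ θ₂ s : ℝ} (hs : s ^ 2 = 1) (hL : 0 ≤ L)
    (h : dist (polar r θ₁) (polar r θ₂) ≤ 2 * L) :
    dist (polar r θ₁) (apex r L θ₁ θ₂ s) = L := by
  have key := dist_polar_apex_sq (μ := (θ₁ + θ₂) / 2) hs (sq_le_of_dist_polar_polar_le hL h)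
  rw [show (θ₁ + θ₂) / 2 + (θ₁ - θ₂) / 2 = θ₁ by ring] at key
  exact (sq_eq_sq₀ dist_nonneg hL).1 key

lemma dist_polar_apex_right {r L θ₁ θ₂ s : ℝ} (hs : s ^ 2 = 1) (hL : 0 ≤ L)
    (h : dist (polar r θ₁) (polar r θ₂) ≤ 2 * L) :
    dist (polar r θ₂) (apex r L θ₁ θ₂ s) = L := by
  rw [dist_comm] at h
  have key := dist_polar_apex_left hs hL h
  rwa [apex, show (θ₂ - θ₁) / 2 = -((θ₁ - θ₂) / 2) by ring, cos_neg, sin_neg, neg_sq,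
    add_comm θ₂] at key

lemma eq_polar_of_mul_sin_eq {x : E²} {μ : ℝ} (h : x 0 * sin μ = x 1 * cos μ) :
    x = polar (x 0 * cos μ + x 1 * sin μ) μ := by
  refine ext_fin_two ?_ ?_
  · simp only [polar_apply_zero]
    linear_combination -x 0 * sin_sq_add_cos_sq μ + sin μ * h
  · simp only [polar_apply_one]
    linear_combination -x 1 * sin_sq_add_cos_sq μ - cos μ * h

lemma eq_apex_of_dist_eq {r L θ₁ θ₂ : ℝ} {x : E²} (hr : r ≠ 0)
    (hδ : sin ((θ₁ - θ₂) / 2) ≠ 0) (h₁ : dist (polar r θ₁) x = L)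
    (h₂ : dist (polar r θ₂) x = L) : ∃ s, s ^ 2 = 1 ∧ x = apex r L θ₁ θ₂ s := by
  obtain ⟨μ, δ, rfl, rfl⟩ : ∃ μ δ, θ₁ = μ + δ ∧ θ₂ = μ - δ :=
    ⟨(θ₁ + θ₂) / 2, (θ₁ - θ₂) / 2, by ring, by ring⟩
  rw [show (μ + δ - (μ - δ)) / 2 = δ by ring] at hδ
  have hL : 0 ≤ L := h₁ ▸ dist_nonneg
  -- `x` is on the perpendicular bisector of the chord, the line through `0` at angle `μ`
  have hline : x 0 * sin μ = x 1 * cos μ := by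
    rw [dist_eq_iff_fin_two hL] at h₁ h₂
    have : 4 * r * sin δ * (x 0 * sin μ - x 1 * cos μ) = 0 := by
      simp only [polar_apply_zero, polar_apply_one, cos_add, cos_sub, sin_add, sin_sub] at h₁ h₂
      linear_combination h₁ - h₂
    simpa [hr, hδ, sub_eq_zero] using this
  set w := x 0 * cos μ + x 1 * sin μ
  rw [eq_polar_of_mul_sin_eq hline, ← sq_eq_sq₀ dist_nonneg hL, dist_polar_polar_sq,
    add_sub_cancel_left] at h₁
  have hρ : |w - r * cos δ| = √(L ^ 2 - r ^ 2 * sin δ ^ 2) := by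
    rw [← sqrt_sq_eq_abs]
    congr 1
    linear_combination h₁ + r ^ 2 * sin_sq_add_cos_sq δ
  have hapex : ∀ s, apex r L (μ + δ) (μ - δ) s =
      polar (r * cos δ + s * √(L ^ 2 - r ^ 2 * sin δ ^ 2)) μ := fun s => by
    rw [apex, show (μ + δ - (μ - δ)) / 2 = δ by ring, show (μ + δ + (μ - δ)) / 2 = μ by ring]
  rcases abs_eq (sqrt_nonneg _) |>.1 hρ with h | h
  · refine ⟨1, one_pow 2, (eq_polar_of_mul_sin_eq hline).trans ?_⟩
    rw [hapex]
    congr 1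
    linarith
  · refine ⟨-1, by norm_num, (eq_polar_of_mul_sin_eq hline).trans ?_⟩
    rw [hapex]
    congr 1
    linarith

lemma abs_sub_le_or_eq_of_dist_polar_le {r θ₁ θ₂ : ℝ} (hr : 0 < r) (hθ : |θ₁ - θ₂| ≤ 4 * π / 3)
    (h : dist (polar r θ₁) (polar r θ₂) ≤ √3 * r) :
    |θ₁ - θ₂| ≤ 2 * π / 3 ∨ |θ₁ - θ₂| = 4 * π / 3 := by
  have hsin : |sin ((θ₁ - θ₂) / 2)| ≤ sin (π / 3) := by
    rw [dist_polar_polar, abs_mul, abs_of_pos (by positivity)] at h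
    rw [sin_pi_div_three]
    nlinarith
  have hhalf : |(θ₁ - θ₂) / 2| = |θ₁ - θ₂| / 2 := by rw [abs_div, abs_two]
  rcases abs_le_or_eq_of_abs_sin_le (by positivity) (by rw [hhalf]; linarith) hsin with h' | h'
  · left; rw [hhalf] at h'; linarith
  · right; rw [hhalf] at h'; linarith

lemma dist_polar_le_of_abs_sub_le {r θ₁ θ₂ : ℝ} (h : |θ₁ - θ₂| ≤ π / 3) :
    dist (polar r θ₁) (polar r θ₂) ≤ |r| := by
  have hsin : |sin ((θ₁ - θ₂) / 2)| ≤ |sin (π / 6)| :=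
    abs_sin_le_abs_sin
      (by rw [abs_div, abs_two, abs_of_pos (show 0 < π / 6 by positivity)]; linarith)
      (by rw [abs_of_pos (show 0 < π / 6 by positivity)]; linarith [pi_pos])
  rw [sin_pi_div_six, abs_of_pos (by norm_num : (0 : ℝ) < 1 / 2)] at hsin
  rw [dist_polar_polar, abs_mul, abs_mul, abs_two]
  nlinarith [abs_nonneg r]

lemma dist_polar_mul_le {r θ₁ θ₂ t : ℝ} (h : |θ₁ - θ₂| ≤ π) (ht₀ : 0 ≤ t) (ht₁ : t ≤ 1) :
    dist (polar r (t * θ₁)) (polar r (t * θ₂)) ≤ dist (polar r θ₁) (polar r θ₂) := by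
  rw [dist_polar_polar, dist_polar_polar, ← mul_sub, mul_div_assoc, abs_mul, abs_mul (2 * r)]
  have hhalf : |(θ₁ - θ₂) / 2| ≤ π / 2 := by rw [abs_div, abs_two]; linarith
  refine mul_le_mul_of_nonneg_left (abs_sin_le_abs_sin ?_ hhalf) (abs_nonneg _)
  rw [abs_mul, abs_of_nonneg ht₀]
  exact mul_le_of_le_one_left (abs_nonneg _) ht₁

lemma dist_polar_eq_of_abs_sub_eq {r θ₁ θ₂ : ℝ}
    (h : |θ₁ - θ₂| = 2 * π / 3 ∨ |θ₁ - θ₂| = 4 * π / 3) :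
    dist (polar r θ₁) (polar r θ₂) = √3 * |r| := by
  have hsin : |sin ((θ₁ - θ₂) / 2)| = √3 / 2 := by
    have hhalf : |(θ₁ - θ₂) / 2| = |θ₁ - θ₂| / 2 := by rw [abs_div, abs_two]
    rw [abs_sin_eq_sin_abs_of_abs_le_pi (by rw [hhalf]; rcases h with h | h <;> linarith [pi_pos]),
      hhalf, ← sin_pi_div_three]
    rcases h with h | h
    · rw [h]; ring_nf
    · rw [h, ← sin_pi_sub]; ring_nf
  rw [dist_polar_polar, abs_mul, abs_mul, abs_two, hsin]
  ring

section FreeApex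

variable {ι : Type*} [DecidableEq ι]

def IsFreeApex (S : Set (ι → E²)) (i j k : ι) (L : ℝ) : Prop :=
  ∀ q ∈ S, dist (q i) (q k) = L ∧ dist (q j) (q k) = L ∧
    ∀ x, dist (q i) x = L → dist (q j) x = L → update q k x ∈ S

variable {S : Set (ι → E²)} {i j k : ι} {L : ℝ} {q : ι → E²}

lemma IsFreeApex.joinedIn_update_of_eq (hS : IsFreeApex S i j k L) (hq : q ∈ S)
    (hij : q i = q j) {x : E²} (hx : dist (q i) x = L) : JoinedIn S q (update q k x) := by
  obtain ⟨hik, -, hmove⟩ := hS q hq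
  have hrank : 1 < Module.rank ℝ E² := by
    rw [← Module.finrank_eq_rank, finrank_euclideanSpace_fin]
    norm_num
  have hcircle : JoinedIn (Metric.sphere (q i) L) (q k) x :=
    (isPathConnected_sphere hrank (q i) (hx ▸ dist_nonneg)).joinedIn _
      (Metric.mem_sphere'.2 hik) _ (Metric.mem_sphere'.2 hx)
  have hpath := hcircle.map (f := fun y => update q k y) (continuous_const.update k continuous_id)
  rw [update_eq_self] at hpath
  refine hpath.mono ?_
  rintro _ ⟨y, hy, rfl⟩
  rw [Metric.mem_sphere'] at hy
  exact hmove y hy (hij ▸ hy)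

lemma IsFreeApex.exists_joinedIn_update_apex (hS : IsFreeApex S i j k L) (hq : q ∈ S)
    {r θ₁ θ₂ : ℝ} (hr : r ≠ 0) (hi : q i = polar r θ₁) (hj : q j = polar r θ₂) :
    ∃ s, s ^ 2 = 1 ∧ JoinedIn S q (update q k (apex r L θ₁ θ₂ s)) := by
  obtain ⟨hik, hjk, -⟩ := hS q hq
  by_cases hδ : sin ((θ₁ - θ₂) / 2) = 0
  · have hchord : dist (polar r θ₁) (polar r θ₂) ≤ 2 * L := by
      rw [← hi, ← hj, two_mul]
      nth_rw 1 [← hik, ← hjk]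
      exact dist_triangle_right _ _ _
    refine ⟨1, one_pow 2, hS.joinedIn_update_of_eq hq ?_ ?_⟩
    · rw [hi, hj, polar_eq_polar_of_sin_eq_zero hδ]
    · rw [hi]
      exact dist_polar_apex_left (one_pow 2) (hik ▸ dist_nonneg) hchord
  · obtain ⟨s, hs, hk⟩ := eq_apex_of_dist_eq hr hδ (hi ▸ hik) (hj ▸ hjk)
    exact ⟨s, hs, by rw [← hk, update_eq_self]; exact JoinedIn.refl hq⟩

end FreeApex

lemma dist_polar_equilateral {θ : ℝ} (hθ : |θ| = 2 * π / 3) :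
    dist (polar √3 0) (polar √3 θ) = 3 ∧ dist (polar √3 0) (polar √3 (-θ)) = 3 ∧
      dist (polar √3 θ) (polar √3 (-θ)) = 3 := by
  have h3 : √3 * |√3| = 3 := by rw [abs_of_nonneg (sqrt_nonneg 3), mul_self_sqrt (by norm_num)]
  refine ⟨?_, ?_, ?_⟩ <;> rw [dist_polar_eq_of_abs_sub_eq, h3]
  · left; rw [zero_sub, abs_neg, hθ]
  · left; rw [zero_sub, neg_neg, hθ]
  · right; rw [sub_neg_eq_add, ← two_mul, abs_mul, abs_two, hθ]; ring

lemma dist_polar_sqrt_three_zero (θ : ℝ) : dist (polar √3 θ) 0 = √3 := by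
  rw [dist_zero_right, norm_polar, abs_of_nonneg (sqrt_nonneg 3)]

namespace HstarPinnedConfig

variable {q : Fin 7 → E²}

lemma isFreeApex_four : IsFreeApex HstarPinnedConfig 0 1 4 (3 / 2) := by
  simp only [IsFreeApex, HstarPinnedConfig]
  rintro q ⟨h3, h0, h03, h13, h23, h04, h05, h14, h16, h25, h26⟩
  exact ⟨h04, h14, fun x h0x h1x => by simp_all⟩

lemma isFreeApex_five : IsFreeApex HstarPinnedConfig 0 2 5 (3 / 2) := by
  simp only [IsFreeApex, HstarPinnedConfig]
  rintro q ⟨h3, h0, h03, h13, h23, h04, h05, h14, h16, h25, h26⟩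
  exact ⟨h05, h25, fun x h0x h2x => by simp_all⟩

lemma isFreeApex_six : IsFreeApex HstarPinnedConfig 1 2 6 (3 / 2) := by
  simp only [IsFreeApex, HstarPinnedConfig]
  rintro q ⟨h3, h0, h03, h13, h23, h04, h05, h14, h16, h25, h26⟩
  exact ⟨h16, h26, fun x h1x h2x => by simp_all⟩

lemma eq_polar_zero (hq : q ∈ HstarPinnedConfig) : q 0 = polar √3 0 := by
  refine ext_fin_two ?_ ?_ <;> simp [hq.2.1]

lemma dist_le_three (hq : q ∈ HstarPinnedConfig) :
    dist (q 0) (q 1) ≤ 3 ∧ dist (q 0) (q 2) ≤ 3 ∧ dist (q 1) (q 2) ≤ 3 := by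
  obtain ⟨-, -, -, -, -, h04, h05, h14, h16, h25, h26⟩ := hq
  refine ⟨?_, ?_, ?_⟩
  · linarith [dist_triangle_right (q 0) (q 1) (q 4)]
  · linarith [dist_triangle_right (q 0) (q 2) (q 5)]
  · linarith [dist_triangle_right (q 1) (q 2) (q 6)]

lemma exists_angles (hq : q ∈ HstarPinnedConfig) :
    ∃ α β, q 1 = polar √3 α ∧ q 2 = polar √3 β ∧ |α| ≤ 2 * π / 3 ∧ |β| ≤ 2 * π / 3 ∧
      (|α - β| ≤ 2 * π / 3 ∨ |α - β| = 4 * π / 3) := by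
  have hcircle : ∀ i, dist (q i) (q 3) = √3 → ∃ θ, |θ| ≤ π ∧ q i = polar √3 θ := fun i hi => by
    rw [hq.1, dist_zero_right] at hi
    simpa [hi] using exists_eq_polar (q i)
  obtain ⟨α, hαπ, hα⟩ := hcircle 1 hq.2.2.2.1
  obtain ⟨β, hβπ, hβ⟩ := hcircle 2 hq.2.2.2.2.1
  obtain ⟨h₁, h₂, h₁₂⟩ := dist_le_three hq
  rw [eq_polar_zero hq, hα] at h₁
  rw [eq_polar_zero hq, hβ] at h₂
  rw [hα, hβ] at h₁₂
  have hr : (0 : ℝ) < √3 := by positivity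
  have h3 : √3 * √3 = 3 := mul_self_sqrt (by norm_num)
  have hπ := pi_pos
  have bound : ∀ θ, |θ| ≤ π → dist (polar √3 0) (polar √3 θ) ≤ 3 → |θ| ≤ 2 * π / 3 := by
    intro θ hθ h
    rw [← abs_neg, ← zero_sub]
    rcases abs_sub_le_or_eq_of_dist_polar_le hr (by rw [zero_sub, abs_neg]; linarith)
      (h.trans h3.ge) with h' | h'
    · exact h'
    · rw [zero_sub, abs_neg] at h'; linarith
  have hα' := bound α hαπ h₁
  have hβ' := bound β hβπ h₂
  refine ⟨α, β, hα, hβ, hα', hβ', abs_sub_le_or_eq_of_dist_polar_le hr ?_ (h₁₂.trans h3.ge)⟩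
  linarith [abs_sub α β]

/-- `v₂, v₃` at angles `α, β`; the sign `sₖ` chooses the side of its chord on which the apex
`vₖ₊₁` lies. -/
noncomputable def ofAngles (α β s₄ s₅ s₆ : ℝ) : Fin 7 → E² :=
  ![polar √3 0, polar √3 α, polar √3 β, 0,
    apex √3 (3 / 2) 0 α s₄, apex √3 (3 / 2) 0 β s₅, apex √3 (3 / 2) α β s₆]

lemma ofAngles_mem {α β s₄ s₅ s₆ : ℝ} (hs₄ : s₄ ^ 2 = 1) (hs₅ : s₅ ^ 2 = 1) (hs₆ : s₆ ^ 2 = 1)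
    (h₁ : dist (polar √3 0) (polar √3 α) ≤ 3) (h₂ : dist (polar √3 0) (polar √3 β) ≤ 3)
    (h₁₂ : dist (polar √3 α) (polar √3 β) ≤ 3) : ofAngles α β s₄ s₅ s₆ ∈ HstarPinnedConfig := by
  have hL : (0 : ℝ) ≤ 3 / 2 := by norm_num
  refine ⟨rfl, ?_, dist_polar_sqrt_three_zero 0, dist_polar_sqrt_three_zero α,
    dist_polar_sqrt_three_zero β, dist_polar_apex_left hs₄ hL (by linarith),
    dist_polar_apex_left hs₅ hL (by linarith), dist_polar_apex_right hs₄ hL (by linarith),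
    dist_polar_apex_left hs₆ hL (by linarith), dist_polar_apex_right hs₅ hL (by linarith),
    dist_polar_apex_right hs₆ hL (by linarith)⟩
  ext i
  fin_cases i <;> simp [ofAngles, polar]

lemma continuous_ofAngles (α β s₄ s₅ s₆ : ℝ) :
    Continuous fun t : ℝ => ofAngles (t * α) (t * β) s₄ s₅ s₆ := by
  refine continuous_pi fun i => ?_
  fin_cases i <;> simp only [ofAngles, apex] <;> fun_prop

lemma exists_joinedIn_ofAngles (hq : q ∈ HstarPinnedConfig) {α β : ℝ}
    (h₁ : q 1 = polar √3 α) (h₂ : q 2 = polar √3 β) :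
    ∃ s₄ s₅ s₆ : ℝ, s₄ ^ 2 = 1 ∧ s₅ ^ 2 = 1 ∧ s₆ ^ 2 = 1 ∧
      JoinedIn HstarPinnedConfig q (ofAngles α β s₄ s₅ s₆) := by
  have hr : √3 ≠ 0 := by positivity
  have h₀ := eq_polar_zero hq
  obtain ⟨s₄, hs₄, j₄⟩ := isFreeApex_four.exists_joinedIn_update_apex hq hr h₀ h₁
  obtain ⟨s₅, hs₅, j₅⟩ := isFreeApex_five.exists_joinedIn_update_apex j₄.target_mem hr
    (by simpa using h₀) (by simpa using h₂)
  obtain ⟨s₆, hs₆, j₆⟩ := isFreeApex_six.exists_joinedIn_update_apex j₅.target_mem hr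
    (by simpa using h₁) (by simpa using h₂)
  refine ⟨s₄, s₅, s₆, hs₄, hs₅, hs₆, ?_⟩
  convert j₄.trans (j₅.trans j₆) using 1
  ext1 i
  fin_cases i <;> simp [ofAngles, h₀, h₁, h₂, hq.1]

lemma joinedIn_ofAngles_of_dist_le {α β s₄ s₅ s₆ : ℝ} (hs₄ : s₄ ^ 2 = 1) (hs₅ : s₅ ^ 2 = 1)
    (hs₆ : s₆ ^ 2 = 1) (hα : |α| ≤ π) (hβ : |β| ≤ π) (hαβ : |α - β| ≤ π)
    (h₁ : dist (polar √3 0) (polar √3 α) ≤ 3) (h₂ : dist (polar √3 0) (polar √3 β) ≤ 3)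
    (h₁₂ : dist (polar √3 α) (polar √3 β) ≤ 3) :
    JoinedIn HstarPinnedConfig (ofAngles 0 0 s₄ s₅ s₆) (ofAngles α β s₄ s₅ s₆) := by
  refine JoinedIn.ofLine (continuous_ofAngles α β s₄ s₅ s₆).continuousOn (by simp) (by simp) ?_
  rintro _ ⟨t, ⟨ht₀, ht₁⟩, rfl⟩
  have hscale : ∀ {θ₁ θ₂}, |θ₁ - θ₂| ≤ π → dist (polar √3 θ₁) (polar √3 θ₂) ≤ 3 →
      dist (polar √3 (t * θ₁)) (polar √3 (t * θ₂)) ≤ 3 :=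
    fun hθ h => (dist_polar_mul_le hθ ht₀ ht₁).trans h
  refine ofAngles_mem hs₄ hs₅ hs₆ ?_ ?_ (hscale hαβ h₁₂)
  · simpa using hscale (by simpa using hα) h₁
  · simpa using hscale (by simpa using hβ) h₂

lemma joinedIn_ofAngles_zero_one {s₄ s₅ s₆ : ℝ} (hs₄ : s₄ ^ 2 = 1) (hs₅ : s₅ ^ 2 = 1)
    (hs₆ : s₆ ^ 2 = 1) :
    JoinedIn HstarPinnedConfig (ofAngles 0 0 s₄ s₅ s₆) (ofAngles 0 0 1 1 1) := by
  have hmem : ∀ {a b c : ℝ}, a ^ 2 = 1 → b ^ 2 = 1 → c ^ 2 = 1 →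
      ofAngles 0 0 a b c ∈ HstarPinnedConfig := fun ha hb hc =>
    ofAngles_mem ha hb hc (by simp) (by simp) (by simp)
  have hx : dist (polar √3 0) (apex √3 (3 / 2) 0 0 1) = 3 / 2 :=
    dist_polar_apex_left (one_pow 2) (by norm_num) (by norm_num)
  have j₄ := isFreeApex_four.joinedIn_update_of_eq (hmem hs₄ hs₅ hs₆) rfl hx
  have j₅ := isFreeApex_five.joinedIn_update_of_eq (hmem (one_pow 2) hs₅ hs₆) rfl hx
  have j₆ := isFreeApex_six.joinedIn_update_of_eq (hmem (one_pow 2) (one_pow 2) hs₆) rfl hx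
  rw [show update (ofAngles 0 0 s₄ s₅ s₆) 4 _ = ofAngles 0 0 1 s₅ s₆ by
    ext1 i; fin_cases i <;> rfl] at j₄
  rw [show update (ofAngles 0 0 1 s₅ s₆) 5 _ = ofAngles 0 0 1 1 s₆ by
    ext1 i; fin_cases i <;> rfl] at j₅
  rw [show update (ofAngles 0 0 1 1 s₆) 6 _ = ofAngles 0 0 1 1 1 by
    ext1 i; fin_cases i <;> rfl] at j₆
  exact j₄.trans (j₅.trans j₆)

lemma joinedIn_ofAngles_zero (hq : q ∈ HstarPinnedConfig) {α β : ℝ} (h₁ : q 1 = polar √3 α)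
    (h₂ : q 2 = polar √3 β) (hα : |α| ≤ π) (hβ : |β| ≤ π) (hαβ : |α - β| ≤ π) :
    JoinedIn HstarPinnedConfig q (ofAngles 0 0 1 1 1) := by
  obtain ⟨s₄, s₅, s₆, hs₄, hs₅, hs₆, hsigns⟩ := exists_joinedIn_ofAngles hq h₁ h₂
  obtain ⟨d₁, d₂, d₁₂⟩ := dist_le_three hq
  rw [eq_polar_zero hq, h₁] at d₁
  rw [eq_polar_zero hq, h₂] at d₂
  rw [h₁, h₂] at d₁₂
  exact hsigns.trans ((joinedIn_ofAngles_of_dist_le hs₄ hs₅ hs₆ hα hβ hαβ d₁ d₂ d₁₂).symm.trans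
    (joinedIn_ofAngles_zero_one hs₄ hs₅ hs₆))

noncomputable def equilateral (θ : ℝ) : Fin 7 → E² :=
  ![polar √3 0, polar √3 θ, polar √3 (-θ), 0, midpoint ℝ (polar √3 0) (polar √3 θ),
    midpoint ℝ (polar √3 0) (polar √3 (-θ)), midpoint ℝ (polar √3 θ) (polar √3 (-θ))]

lemma equilateral_mem {θ : ℝ} (hθ : |θ| = 2 * π / 3) : equilateral θ ∈ HstarPinnedConfig := by
  obtain ⟨h₁, h₂, h₁₂⟩ := dist_polar_equilateral hθ
  have hl : ∀ a b : E², dist a b = 3 → dist a (midpoint ℝ a b) = 3 / 2 := fun a b h => by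
    rw [dist_left_midpoint, h]; norm_num
  have hr : ∀ a b : E², dist a b = 3 → dist b (midpoint ℝ a b) = 3 / 2 := fun a b h => by
    rw [dist_right_midpoint, h]; norm_num
  refine ⟨rfl, ?_, dist_polar_sqrt_three_zero 0, dist_polar_sqrt_three_zero θ,
    dist_polar_sqrt_three_zero (-θ), hl _ _ h₁, hl _ _ h₂, hr _ _ h₁, hl _ _ h₁₂, hr _ _ h₂,
    hr _ _ h₁₂⟩
  ext i
  fin_cases i <;> simp [equilateral, polar]

lemma eq_equilateral (hq : q ∈ HstarPinnedConfig) {θ : ℝ} (hθ : |θ| = 2 * π / 3)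
    (h₁ : q 1 = polar √3 θ) (h₂ : q 2 = polar √3 (-θ)) : q = equilateral θ := by
  have h₀ := eq_polar_zero hq
  obtain ⟨h3, -, -, -, -, h04, h05, h14, h16, h25, h26⟩ := hq
  obtain ⟨d₁, d₂, d₁₂⟩ := dist_polar_equilateral hθ
  have hmid : ∀ {a b x : E²}, dist a b = 3 → dist a x = 3 / 2 → dist b x = 3 / 2 →
      x = midpoint ℝ a b := fun hab hax hbx =>
    eq_midpoint_of_dist_eq_half (by rw [hax, hab]) (by rw [dist_comm, hbx, hab])
  simp only [h₀, h₁, h₂] at h04 h05 h14 h16 h25 h26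
  ext1 i
  fin_cases i
  exacts [h₀, h₁, h₂, h3, hmid d₁ h04 h14, hmid d₂ h05 h25, hmid d₁₂ h16 h26]

lemma eq_equilateral_of_dist_lt (hq : q ∈ HstarPinnedConfig) {θ : ℝ} (hθ : |θ| = 2 * π / 3)
    (hd : dist q (equilateral θ) < 1 / 2) : q = equilateral θ := by
  have hnear : ∀ i, dist (q i) (equilateral θ i) < 1 / 2 := fun i =>
    (dist_le_pi_dist q _ i).trans_lt hd
  obtain ⟨d₁, d₂, d₁₂⟩ := dist_polar_equilateral hθ
  obtain ⟨α, β, h₁, h₂, hα, hβ, harc | hcorner⟩ := exists_angles hq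
  · -- an arc configuration has a chord of length at most `√3`, but all chords of `q` exceed `2`
    exfalso
    have hlong : ∀ i j, dist (equilateral θ i) (equilateral θ j) = 3 → √3 < dist (q i) (q j) := by
      intro i j h
      have := dist_triangle4 (equilateral θ i) (q i) (q j) (equilateral θ j)
      rw [dist_comm (equilateral θ i) (q i)] at this
      have h3 : √3 < 2 := by rw [sqrt_lt' two_pos]; norm_num
      linarith [hnear i, hnear j]
    have hshort : ∀ {θ₁ θ₂}, |θ₁ - θ₂| ≤ π / 3 → dist (polar √3 θ₁) (polar √3 θ₂) ≤ √3 :=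
      fun h => (dist_polar_le_of_abs_sub_le h).trans_eq (abs_of_nonneg (sqrt_nonneg 3))
    rcases abs_le_pi_div_three_or hα hβ harc with h | h | h
    · exact (hlong 0 1 d₁).not_ge (by rw [eq_polar_zero hq, h₁]; exact hshort (by simpa using h))
    · exact (hlong 0 2 d₂).not_ge (by rw [eq_polar_zero hq, h₂]; exact hshort (by simpa using h))
    · exact (hlong 1 2 d₁₂).not_ge (by rw [h₁, h₂]; exact hshort h)
  · obtain ⟨rfl, hα'⟩ := neg_eq_and_abs_eq_of_abs_sub_eq hα hβ hcorner
    rw [eq_equilateral hq hα' h₁ h₂] at hnear ⊢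
    rcases abs_eq_abs.1 (hα'.trans hθ.symm) with rfl | rfl
    · rfl
    · have h := hnear 1
      rw [dist_comm] at d₁₂
      simp only [equilateral, Matrix.cons_val_one, Matrix.cons_val_zero, d₁₂] at h
      norm_num at h

lemma joinedIn_of_ne (hq : q ∈ HstarPinnedConfig) (hne₁ : q ≠ equilateral (2 * π / 3))
    (hne₂ : q ≠ equilateral (-(2 * π / 3))) :
    JoinedIn HstarPinnedConfig q (ofAngles 0 0 1 1 1) := by
  have hπ := pi_pos
  obtain ⟨α, β, h₁, h₂, hα, hβ, harc | hcorner⟩ := exists_angles hq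
  · exact joinedIn_ofAngles_zero hq h₁ h₂ (by linarith) (by linarith) (by linarith)
  · obtain ⟨rfl, hα'⟩ := neg_eq_and_abs_eq_of_abs_sub_eq hα hβ hcorner
    rcases abs_eq (by positivity) |>.1 hα' with rfl | rfl
    · exact (hne₁ (eq_equilateral hq hα' h₁ h₂)).elim
    · exact (hne₂ (eq_equilateral hq hα' h₁ h₂)).elim

theorem natCard_connectedComponents : Nat.card (ConnectedComponents HstarPinnedConfig) = 3 := by
  have hθ₁ : |2 * π / 3| = 2 * π / 3 := abs_of_pos (by positivity)
  have hθ₂ : |-(2 * π / 3)| = 2 * π / 3 := by rw [abs_neg, hθ₁]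
  have hopen : ∀ {θ}, (hθ : |θ| = 2 * π / 3) →
      IsOpen {(⟨equilateral θ, equilateral_mem hθ⟩ : HstarPinnedConfig)} := fun hθ =>
    Metric.isOpen_singleton_iff.2 ⟨1 / 2, by norm_num, fun y hy =>
      Subtype.ext (eq_equilateral_of_dist_lt y.2 hθ hy)⟩
  have hbase : ofAngles 0 0 1 1 1 ∈ HstarPinnedConfig :=
    ofAngles_mem (one_pow 2) (one_pow 2) (one_pow 2) (by simp) (by simp) (by simp)
  have hne : ∀ {p p' : HstarPinnedConfig}, dist (p.1 1) (p'.1 1) = 3 → p ≠ p' :=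
    fun h h' => by rw [h', dist_self] at h; norm_num at h
  obtain ⟨d₁, -, d₁₂⟩ := dist_polar_equilateral hθ₁
  obtain ⟨d₁', -, -⟩ := dist_polar_equilateral hθ₂
  refine natCard_connectedComponents_eq_three (c := ⟨ofAngles 0 0 1 1 1, hbase⟩) (hopen hθ₁)
    (hopen hθ₂) (hne d₁₂) (hne d₁) (hne d₁') fun x hx₁ hx₂ => ?_
  have hj := joinedIn_of_ne x.2 (fun h => hx₁ (Subtype.ext h)) (fun h => hx₂ (Subtype.ext h))
  exact pathComponent_subset_component _ hj.joined_subtype.symm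

end HstarPinnedConfig

namespace GstarstarPinnedConfig

variable {q : Fin 8 → E²}

lemma mem_iff : q ∈ GstarstarPinnedConfig ↔
    (fun i : Fin 7 => q i.castSucc) ∈ HstarPinnedConfig ∧
      dist (q 1) (q 7) = √2 ∧ dist (q 2) (q 7) = √2 := by
  simp only [GstarstarPinnedConfig, HstarPinnedConfig, mem_ofPred_eq, and_assoc]
  rfl

lemma isFreeApex_four : IsFreeApex GstarstarPinnedConfig 0 1 4 (3 / 2) := by
  simp only [IsFreeApex, GstarstarPinnedConfig]
  rintro q ⟨h3, h0, h03, h13, h23, h04, h05, h14, h16, h25, h26, h17, h27⟩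
  exact ⟨h04, h14, fun x h0x h1x => by simp_all⟩

lemma isFreeApex_five : IsFreeApex GstarstarPinnedConfig 0 2 5 (3 / 2) := by
  simp only [IsFreeApex, GstarstarPinnedConfig]
  rintro q ⟨h3, h0, h03, h13, h23, h04, h05, h14, h16, h25, h26, h17, h27⟩
  exact ⟨h05, h25, fun x h0x h2x => by simp_all⟩

lemma isFreeApex_six : IsFreeApex GstarstarPinnedConfig 1 2 6 (3 / 2) := by
  simp only [IsFreeApex, GstarstarPinnedConfig]
  rintro q ⟨h3, h0, h03, h13, h23, h04, h05, h14, h16, h25, h26, h17, h27⟩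
  exact ⟨h16, h26, fun x h1x h2x => by simp_all⟩

lemma isFreeApex_seven : IsFreeApex GstarstarPinnedConfig 1 2 7 √2 := by
  simp only [IsFreeApex, GstarstarPinnedConfig]
  rintro q ⟨h3, h0, h03, h13, h23, h04, h05, h14, h16, h25, h26, h17, h27⟩
  exact ⟨h17, h27, fun x h1x h2x => by simp_all⟩

lemma exists_angles (hq : q ∈ GstarstarPinnedConfig) :
    ∃ α β, q 1 = polar √3 α ∧ q 2 = polar √3 β ∧ |α| ≤ 2 * π / 3 ∧ |β| ≤ 2 * π / 3 ∧
      |α - β| ≤ 2 * π / 3 := by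
  obtain ⟨hH, h17, h27⟩ := mem_iff.1 hq
  obtain ⟨α, β, h₁, h₂, hα, hβ, harc | hcorner⟩ := HstarPinnedConfig.exists_angles hH
  · exact ⟨α, β, h₁, h₂, hα, hβ, harc⟩
  · have h₁₂ : dist (q 1) (q 2) ≤ 2 * √2 := by linarith [dist_triangle_right (q 1) (q 2) (q 7)]
    have h3 : √3 * |√3| = 3 := by rw [abs_of_nonneg (sqrt_nonneg 3), mul_self_sqrt (by norm_num)]
    rw [show q 1 = polar √3 α from h₁, show q 2 = polar √3 β from h₂,
      dist_polar_eq_of_abs_sub_eq (Or.inr hcorner), h3] at h₁₂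
    linarith [two_mul_sqrt_two_lt_three]

noncomputable def ofAngles (α β s₄ s₅ s₆ s₇ : ℝ) : Fin 8 → E² :=
  ![polar √3 0, polar √3 α, polar √3 β, 0,
    apex √3 (3 / 2) 0 α s₄, apex √3 (3 / 2) 0 β s₅, apex √3 (3 / 2) α β s₆, apex √3 √2 α β s₇]

lemma ofAngles_mem {α β s₄ s₅ s₆ s₇ : ℝ} (hs₄ : s₄ ^ 2 = 1) (hs₅ : s₅ ^ 2 = 1)
    (hs₆ : s₆ ^ 2 = 1) (hs₇ : s₇ ^ 2 = 1) (h₁ : dist (polar √3 0) (polar √3 α) ≤ 3)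
    (h₂ : dist (polar √3 0) (polar √3 β) ≤ 3) (h₁₂ : dist (polar √3 α) (polar √3 β) ≤ 2 * √2) :
    ofAngles α β s₄ s₅ s₆ s₇ ∈ GstarstarPinnedConfig := by
  have hL : 0 ≤ √2 := sqrt_nonneg 2
  refine mem_iff.2 ⟨?_, dist_polar_apex_left hs₇ hL h₁₂, dist_polar_apex_right hs₇ hL h₁₂⟩
  convert HstarPinnedConfig.ofAngles_mem hs₄ hs₅ hs₆ h₁ h₂
    (h₁₂.trans two_mul_sqrt_two_lt_three.le) using 1
  ext1 i
  fin_cases i <;> rfl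

lemma continuous_ofAngles (α β s₄ s₅ s₆ s₇ : ℝ) :
    Continuous fun t : ℝ => ofAngles (t * α) (t * β) s₄ s₅ s₆ s₇ := by
  refine continuous_pi fun i => ?_
  fin_cases i <;> simp only [ofAngles, apex] <;> fun_prop

lemma exists_joinedIn_ofAngles (hq : q ∈ GstarstarPinnedConfig) {α β : ℝ}
    (h₁ : q 1 = polar √3 α) (h₂ : q 2 = polar √3 β) :
    ∃ s₄ s₅ s₆ s₇ : ℝ, s₄ ^ 2 = 1 ∧ s₅ ^ 2 = 1 ∧ s₆ ^ 2 = 1 ∧ s₇ ^ 2 = 1 ∧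
      JoinedIn GstarstarPinnedConfig q (ofAngles α β s₄ s₅ s₆ s₇) := by
  have hr : √3 ≠ 0 := by positivity
  have h₀ : q 0 = polar √3 0 := HstarPinnedConfig.eq_polar_zero (mem_iff.1 hq).1
  obtain ⟨s₄, hs₄, j₄⟩ := isFreeApex_four.exists_joinedIn_update_apex hq hr h₀ h₁
  obtain ⟨s₅, hs₅, j₅⟩ := isFreeApex_five.exists_joinedIn_update_apex j₄.target_mem hr
    (by simpa using h₀) (by simpa using h₂)
  obtain ⟨s₆, hs₆, j₆⟩ := isFreeApex_six.exists_joinedIn_update_apex j₅.target_mem hr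
    (by simpa using h₁) (by simpa using h₂)
  obtain ⟨s₇, hs₇, j₇⟩ := isFreeApex_seven.exists_joinedIn_update_apex j₆.target_mem hr
    (by simpa using h₁) (by simpa using h₂)
  refine ⟨s₄, s₅, s₆, s₇, hs₄, hs₅, hs₆, hs₇, ?_⟩
  convert j₄.trans (j₅.trans (j₆.trans j₇)) using 1
  ext1 i
  fin_cases i <;> simp [ofAngles, h₀, h₁, h₂, hq.1]

lemma joinedIn_ofAngles_of_dist_le {α β s₄ s₅ s₆ s₇ : ℝ} (hs₄ : s₄ ^ 2 = 1)
    (hs₅ : s₅ ^ 2 = 1) (hs₆ : s₆ ^ 2 = 1) (hs₇ : s₇ ^ 2 = 1) (hα : |α| ≤ π) (hβ : |β| ≤ π)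
    (hαβ : |α - β| ≤ π) (h₁ : dist (polar √3 0) (polar √3 α) ≤ 3)
    (h₂ : dist (polar √3 0) (polar √3 β) ≤ 3) (h₁₂ : dist (polar √3 α) (polar √3 β) ≤ 2 * √2) :
    JoinedIn GstarstarPinnedConfig (ofAngles 0 0 s₄ s₅ s₆ s₇) (ofAngles α β s₄ s₅ s₆ s₇) := by
  refine JoinedIn.ofLine (continuous_ofAngles α β s₄ s₅ s₆ s₇).continuousOn (by simp)
    (by simp) ?_
  rintro _ ⟨t, ⟨ht₀, ht₁⟩, rfl⟩
  have hscale : ∀ {θ₁ θ₂ d}, |θ₁ - θ₂| ≤ π → dist (polar √3 θ₁) (polar √3 θ₂) ≤ d →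
      dist (polar √3 (t * θ₁)) (polar √3 (t * θ₂)) ≤ d :=
    fun hθ h => (dist_polar_mul_le hθ ht₀ ht₁).trans h
  refine ofAngles_mem hs₄ hs₅ hs₆ hs₇ ?_ ?_ (hscale hαβ h₁₂)
  · simpa using hscale (by simpa using hα) h₁
  · simpa using hscale (by simpa using hβ) h₂

lemma joinedIn_ofAngles_zero_one {s₄ s₅ s₆ s₇ : ℝ} (hs₄ : s₄ ^ 2 = 1) (hs₅ : s₅ ^ 2 = 1)
    (hs₆ : s₆ ^ 2 = 1) (hs₇ : s₇ ^ 2 = 1) :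
    JoinedIn GstarstarPinnedConfig (ofAngles 0 0 s₄ s₅ s₆ s₇) (ofAngles 0 0 1 1 1 1) := by
  have hmem : ∀ {a b c d : ℝ}, a ^ 2 = 1 → b ^ 2 = 1 → c ^ 2 = 1 → d ^ 2 = 1 →
      ofAngles 0 0 a b c d ∈ GstarstarPinnedConfig := fun ha hb hc hd =>
    ofAngles_mem ha hb hc hd (by simp) (by simp) (by simp)
  have hx : dist (polar √3 0) (apex √3 (3 / 2) 0 0 1) = 3 / 2 :=
    dist_polar_apex_left (one_pow 2) (by norm_num) (by norm_num)
  have hx' : dist (polar √3 0) (apex √3 √2 0 0 1) = √2 :=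
    dist_polar_apex_left (one_pow 2) (sqrt_nonneg 2) (by simp)
  have j₄ := isFreeApex_four.joinedIn_update_of_eq (hmem hs₄ hs₅ hs₆ hs₇) rfl hx
  have j₅ := isFreeApex_five.joinedIn_update_of_eq (hmem (one_pow 2) hs₅ hs₆ hs₇) rfl hx
  have j₆ := isFreeApex_six.joinedIn_update_of_eq
    (hmem (one_pow 2) (one_pow 2) hs₆ hs₇) rfl hx
  have j₇ := isFreeApex_seven.joinedIn_update_of_eq
    (hmem (one_pow 2) (one_pow 2) (one_pow 2) hs₇) rfl hx'
  rw [show update (ofAngles 0 0 s₄ s₅ s₆ s₇) 4 _ = ofAngles 0 0 1 s₅ s₆ s₇ by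
    ext1 i; fin_cases i <;> rfl] at j₄
  rw [show update (ofAngles 0 0 1 s₅ s₆ s₇) 5 _ = ofAngles 0 0 1 1 s₆ s₇ by
    ext1 i; fin_cases i <;> rfl] at j₅
  rw [show update (ofAngles 0 0 1 1 s₆ s₇) 6 _ = ofAngles 0 0 1 1 1 s₇ by
    ext1 i; fin_cases i <;> rfl] at j₆
  rw [show update (ofAngles 0 0 1 1 1 s₇) 7 _ = ofAngles 0 0 1 1 1 1 by
    ext1 i; fin_cases i <;> rfl] at j₇
  exact j₄.trans (j₅.trans (j₆.trans j₇))

lemma joinedIn_ofAngles_zero (hq : q ∈ GstarstarPinnedConfig) :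
    JoinedIn GstarstarPinnedConfig q (ofAngles 0 0 1 1 1 1) := by
  have hπ := pi_pos
  obtain ⟨α, β, h₁, h₂, hα, hβ, hαβ⟩ := exists_angles hq
  obtain ⟨s₄, s₅, s₆, s₇, hs₄, hs₅, hs₆, hs₇, hsigns⟩ := exists_joinedIn_ofAngles hq h₁ h₂
  obtain ⟨hH, h17, h27⟩ := mem_iff.1 hq
  have h₀ : q 0 = polar √3 0 := HstarPinnedConfig.eq_polar_zero hH
  have d₁ : dist (q 0) (q 1) ≤ 3 := (HstarPinnedConfig.dist_le_three hH).1
  have d₂ : dist (q 0) (q 2) ≤ 3 := (HstarPinnedConfig.dist_le_three hH).2.1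
  have d₁₂ : dist (q 1) (q 2) ≤ 2 * √2 := by linarith [dist_triangle_right (q 1) (q 2) (q 7)]
  rw [h₀, h₁] at d₁
  rw [h₀, h₂] at d₂
  rw [h₁, h₂] at d₁₂
  exact hsigns.trans ((joinedIn_ofAngles_of_dist_le hs₄ hs₅ hs₆ hs₇ (by linarith) (by linarith)
    (by linarith) d₁ d₂ d₁₂).symm.trans (joinedIn_ofAngles_zero_one hs₄ hs₅ hs₆ hs₇))

theorem isPathConnected : IsPathConnected GstarstarPinnedConfig :=
  ⟨ofAngles 0 0 1 1 1 1, ofAngles_mem (one_pow 2) (one_pow 2) (one_pow 2) (one_pow 2) (by simp)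
    (by simp) (by simp), fun _ hq => (joinedIn_ofAngles_zero hq).symm⟩

end GstarstarPinnedConfig

/-- **Example: a disconnected moduli space becoming connected after adding
edges.** The pinned configuration space `C_{v₄,v₁}(H★, h)` has exactly three
connected components, while the pinned configuration space
`C_{v₄,v₁}(G★★, l)` of the larger weighted graph is nonempty and connected. -/
theorem Hstar_three_components_Gstarstar_connected :
    Nat.card (ConnectedComponents HstarPinnedConfig) = 3 ∧
    GstarstarPinnedConfig.Nonempty ∧ IsConnected GstarstarPinnedConfig :=
  ⟨HstarPinnedConfig.natCard_connectedComponents, GstarstarPinnedConfig.isPathConnected.nonempty,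
    GstarstarPinnedConfig.isPathConnected.isConnected⟩
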